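/- Let X be a module and A : X → X a Drazin invertible linear operator with Drazin inverse Aᵈ and index k. Then X = ker(I - AAᵈ) ⊕ range(I - AAᵈ), both summands are invariant under A, the restriction of A to ker(I - AAᵈ) is bijective, and the restriction of A to range(I - AAᵈ) is nilpotent of index k. -/

import Mathlib

/-! `P = 1 - A D` is an idempotent commuting with `A`, so its kernel and range are complementary
`A`-invariant submodules. On `ker P`, where `A D` acts as the identity, `D` inverts `A`. Since
`A ^ m * P = A ^ m - A ^ (m + 1) * D`, the power `A ^ m` kills `range P` exactly when
`A ^ (m + 1) * D = A ^ m`, which by the minimality of `k` makes `k` the nilpotency index. -/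

open LinearMap

theorem isIdempotentElem_mul_of_commute {M : Type*} [Monoid M] {a d : M}
    (hc : Commute a d) (hd : a * d ^ 2 = d) : IsIdempotentElem (a * d) :=
  calc a * d * (a * d) = a * (d * a) * d := by simp only [mul_assoc]
    _ = a * (a * d ^ 2) := by rw [← hc.eq, sq]; simp only [mul_assoc]
    _ = a * d := by rw [hd]

theorem pow_mul_one_sub_mul_eq_zero_iff {R : Type*} [Ring R] {a d : R} (m : ℕ) :
    a ^ m * (1 - a * d) = 0 ↔ a ^ (m + 1) * d = a ^ m := by
  rw [mul_sub, mul_one, ← mul_assoc, ← pow_succ, sub_eq_zero, eq_comm]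

namespace Module.End

variable {R X : Type*} [Ring R] [AddCommGroup X] [Module R X]

theorem forall_mem_range_apply_eq_zero_iff {f g : Module.End R X} :
    (∀ x ∈ range g, f x = 0) ↔ f * g = 0 :=
  range_le_ker_iff

theorem mem_ker_one_sub_iff {f : Module.End R X} {x : X} : x ∈ ker (1 - f) ↔ f x = x := by
  rw [mem_ker, LinearMap.sub_apply, one_apply, sub_eq_zero, eq_comm]

variable {A D : Module.End R X}

theorem eq_zero_of_mem_ker_one_sub_mul (hc : Commute A D) {x : X}
    (hx : x ∈ ker (1 - A * D)) (hAx : A x = 0) : x = 0 := by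
  rw [← mem_ker_one_sub_iff.mp hx, hc.eq, mul_apply, hAx, map_zero]

theorem apply_mem_ker_one_sub_mul (hd : A * D ^ 2 = D) (y : X) : D y ∈ ker (1 - A * D) := by
  rw [mem_ker_one_sub_iff, ← mul_apply, mul_assoc, ← sq, hd]

end Module.End

open Module.End in
/-- If `A` is Drazin invertible with Drazin inverse `D` and index `k`, then with
`P = 1 - A D`, `X = ker P ⊕ range P`, both summands are `A`-invariant, the
restriction of `A` to `ker P` is bijective (injective and surjective onto `ker P`),
and the restriction of `A` to `range P` is nilpotent of index `k`. -/
theorem decomposition_of_drazin {R X : Type*} [Ring R] [AddCommGroup X] [Module R X]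
    (A D : Module.End R X) (k : ℕ)
    (hc : A * D = D * A) (hd : A * D ^ 2 = D)
    (hk : A ^ (k + 1) * D = A ^ k)
    (hmin : ∀ m : ℕ, A ^ (m + 1) * D = A ^ m → k ≤ m) :
    IsCompl (LinearMap.ker (1 - A * D)) (LinearMap.range (1 - A * D)) ∧
    (∀ x ∈ LinearMap.ker (1 - A * D), A x ∈ LinearMap.ker (1 - A * D)) ∧
    (∀ x ∈ LinearMap.range (1 - A * D), A x ∈ LinearMap.range (1 - A * D)) ∧
    (∀ x ∈ LinearMap.ker (1 - A * D), A x = 0 → x = 0) ∧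
    (∀ y ∈ LinearMap.ker (1 - A * D), ∃ x ∈ LinearMap.ker (1 - A * D), A x = y) ∧
    (∀ x ∈ LinearMap.range (1 - A * D), (A ^ k) x = 0) ∧
    (∀ m < k, ∃ x ∈ LinearMap.range (1 - A * D), (A ^ m) x ≠ 0) := by
  have hP : IsIdempotentElem (1 - A * D) := (isIdempotentElem_mul_of_commute hc hd).one_sub
  have hPA : Commute (1 - A * D) A :=
    (Commute.one_left A).sub_left ((Commute.refl A).mul_right hc).symm
  obtain ⟨hrange, hker⟩ := (LinearMap.IsIdempotentElem.commute_iff hP).mp hPA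
  refine ⟨hP.isCompl.symm, (mem_invtSubmodule_iff_forall_mem_of_mem _).mp hker,
    (mem_invtSubmodule_iff_forall_mem_of_mem _).mp hrange,
    fun x hx ↦ eq_zero_of_mem_ker_one_sub_mul hc hx,
    fun y hy ↦ ⟨D y, apply_mem_ker_one_sub_mul hd y, mem_ker_one_sub_iff.mp hy⟩,
    forall_mem_range_apply_eq_zero_iff.mpr ((pow_mul_one_sub_mul_eq_zero_iff k).mpr hk), ?_⟩
  intro m hm
  by_contra! hnil
  exact hm.not_ge <| hmin m <|
    (pow_mul_one_sub_mul_eq_zero_iff m).mp (forall_mem_range_apply_eq_zero_iff.mp hnil)
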